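/- arXiv:2312.13681 — 2 statements merged into one kernel-verified Lean document; each statement's English description precedes it below -/
import Mathlib

section
/- Let λ be a partition of m and n ≥ m. Then χ^λ_{(1^n)}(q) = C(n,m) · m! / ∏_{(i,j)∈λ} h_{ij}, where C(n,m) is the binomial coefficient and h_{ij} = λ_i + λ'_j − i − j + 1 is the hook length of λ at the box (i,j), λ' being the conjugate partition. -/
open Finset

noncomputable section

abbrev FF : Type := RatFunc ℚ

/-- The ring Λ of symmetric functions over ℚ(t), as the polynomial ring in the
algebraically independent power sums `pp 1, pp 2, …`. -/
abbrev SymF : Type := MvPolynomial ℕ+ FF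

/-- The variable t of the ground field ℚ(t). -/
def tv : FF := RatFunc.X

/-- the power sum p_n -/
def pp (n : ℕ+) : SymF := MvPolynomial.X n

/-- q_n(a), defined by Σ_{n≥0} q_n(a) z^n = exp(Σ_{n≥1} ((1-a^n)/n) p_n z^n);
equivalently (taking the logarithmic derivative of the generating function)
by q_0 = 1 and n·q_n = Σ_{k=1}^{n} (1-a^k) p_k q_{n-k}. -/
def qn (a : FF) : ℕ → SymF
  | 0 => 1
  | n + 1 =>
      (((n : FF) + 1)⁻¹) • ∑ k ∈ Finset.range (n + 1),
        (MvPolynomial.C (1 - a ^ (k + 1))) * pp ⟨k + 1, Nat.succ_pos k⟩ * qn a (n - k)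
  termination_by n => n
  decreasing_by omega

/-- q̂_n(a), defined by Σ_{n≥0} q̂_n(a) z^n = exp(Σ_{n≥1} ((1-a^n)/n)(1+p_n) z^n);
equivalently by q̂_0 = 1 and n·q̂_n = Σ_{k=1}^{n} (1-a^k)(1+p_k) q̂_{n-k}. -/
def qhat (a : FF) : ℕ → SymF
  | 0 => 1
  | n + 1 =>
      (((n : FF) + 1)⁻¹) • ∑ k ∈ Finset.range (n + 1),
        (MvPolynomial.C (1 - a ^ (k + 1))) * (1 + pp ⟨k + 1, Nat.succ_pos k⟩) * qhat a (n - k)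
  termination_by n => n
  decreasing_by omega

/-- the number of nonzero parts of a composition -/
def ell {l : ℕ} (mu : Fin l → ℕ) : ℕ := (Finset.univ.filter fun i => mu i ≠ 0).card

/-- q̂_μ(a) = ∏_i q̂_{μ_i}(a). -/
def qhatProd (a : FF) {l : ℕ} (mu : Fin l → ℕ) : SymF := ∏ i, qhat a (mu i)

/-- q_μ(a) = ∏_i q_{μ_i}(a). -/
def qnProd (a : FF) {l : ℕ} (mu : Fin l → ℕ) : SymF := ∏ i, qn a (mu i)

/-- z_λ, where the finitely supported function d records the multiplicities of the parts. -/
def zfac (d : ℕ+ →₀ ℕ) : FF :=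
  ∏ i ∈ d.support, (((i : ℕ) : FF) ^ (d i) * (Nat.factorial (d i) : FF))

/-- The Hall inner product on Λ, determined by ⟨p_λ, p_μ⟩ = δ_{λμ} z_λ. -/
def hall (f g : SymF) : FF :=
  ∑ d ∈ f.support, MvPolynomial.coeff d f * MvPolynomial.coeff d g * zfac d

/-- the complete homogeneous symmetric function h_n, defined by
Σ_{n≥0} h_n z^n = exp(Σ_{n≥1} p_n z^n / n); equivalently by h_0 = 1 and
n·h_n = Σ_{k=1}^{n} p_k h_{n-k} (Newton's identity). -/
def hh : ℕ → SymF
  | 0 => 1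
  | n + 1 =>
      (((n : FF) + 1)⁻¹) • ∑ k ∈ Finset.range (n + 1),
        pp ⟨k + 1, Nat.succ_pos k⟩ * hh (n - k)
  termination_by n => n
  decreasing_by omega

/-- h_k for k ∈ ℤ, with h_k = 0 for k < 0. -/
def hZ (k : ℤ) : SymF := if 0 ≤ k then hh k.toNat else 0

/-- The Schur function s_λ (via the Jacobi–Trudi formula). -/
def schur {r : ℕ} (lam : Fin r → ℕ) : SymF :=
  Matrix.det (Matrix.of fun i j : Fin r => hZ ((lam i : ℤ) + (j : ℤ) - (i : ℤ)))

/-- The variable q of ℚ(q) (the same as tv, renamed for readability). -/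
def qv : FF := RatFunc.X

/-- C(μ;k): compositions τ ⊂ μ with |τ| = k. -/
def Cset {l : ℕ} (mu : Fin l → ℕ) (k : ℕ) : Finset (Fin l → ℕ) :=
  (Finset.Iic mu).filter fun τ => ∑ i, τ i = k

/-- The irreducible character χ^λ_μ(q) of the q-rook monoid algebra R_n(q), via the
Frobenius formula χ^λ_μ(q) = (q^{|μ|}/(q-1)^{l(μ)}) ⟨q̂_μ(q⁻¹), s_λ⟩. -/
def chi {r l : ℕ} (lam : Fin r → ℕ) (mu : Fin l → ℕ) : FF :=
  qv ^ (∑ i, mu i) / (qv - 1) ^ (ell mu) * hall (qhatProd qv⁻¹ mu) (schur lam)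

/-- The hook length h_{ij} = λ_i + λ'_j - i - j + 1 of λ at the (0-indexed) box (i,j),
where λ'_j = #{i' : λ_{i'} > j} is the conjugate partition. -/
def hookLen {r : ℕ} (lam : Fin r → ℕ) (i : Fin r) (j : ℕ) : ℕ :=
  (lam i - j) + ((Finset.univ.filter fun i' : Fin r => j < lam i').card - (i : ℕ)) - 1

/-!
Since `q̂_1(a) = (1 - a)(1 + p_1)`, the pairing `⟨q̂_{(1^n)}(q⁻¹), s_λ⟩` equals
`(1 - q⁻¹)^n ∑_k C(n,k) ⟨p_1^k, s_λ⟩`, and by homogeneity only `k = m` survives, leaving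
`(1 - q⁻¹)^n C(n,m) m! [p_1^m] s_λ`. The coefficient of `p_1^m` in the homogeneous `s_λ` is its
value at `p_1 = 1`, `p_k = 0` (`k ≥ 2`), where `h_k ↦ 1/k!`. By Jacobi–Trudi this value is
`det (1/(β_i - (r-1-j))!)` with `β_i = λ_i + r - 1 - i`; clearing the factorials leaves a
Vandermonde determinant in falling factorials, so the value is
`∏_{i<j} (β_i - β_j) / ∏_i β_i!`, which is `1/∏ h` by the hook length identity
`∏ h · ∏_{i<j} (β_i - β_j) = ∏_i β_i!`.
-/

open MvPolynomial

theorem hall_eq_sum_of_support_subset {f : SymF} (g : SymF) {S : Finset (ℕ+ →₀ ℕ)}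
    (hS : f.support ⊆ S) : hall f g = ∑ d ∈ S, coeff d f * coeff d g * zfac d :=
  sum_subset hS fun d _ hd => by rw [notMem_support_iff.mp hd, zero_mul, zero_mul]

theorem hall_add (f f' g : SymF) : hall (f + f') g = hall f g + hall f' g := by
  rw [hall_eq_sum_of_support_subset g support_add,
    hall_eq_sum_of_support_subset g subset_union_left,
    hall_eq_sum_of_support_subset g subset_union_right, ← sum_add_distrib]
  simp only [coeff_add, add_mul]

theorem hall_smul (c : FF) (f g : SymF) : hall (c • f) g = c * hall f g := by
  rw [hall_eq_sum_of_support_subset g support_smul, hall, mul_sum]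
  simp only [coeff_smul, smul_eq_mul, mul_assoc]

theorem hall_sum {ι : Type*} (s : Finset ι) (f : ι → SymF) (g : SymF) :
    hall (∑ i ∈ s, f i) g = ∑ i ∈ s, hall (f i) g := by
  classical
  induction s using Finset.induction_on with
  | empty => simp [hall]
  | insert i s hi ih => rw [sum_insert hi, hall_add, ih, sum_insert hi]

theorem hall_pp_one_pow (k : ℕ) (g : SymF) :
    hall (pp 1 ^ k) g = coeff (Finsupp.single 1 k) g * k.factorial := by
  have hsupp : (pp 1 ^ k).support ⊆ {Finsupp.single 1 k} := by
    rw [pp, X_pow_eq_monomial]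
    exact support_monomial_subset
  rw [hall_eq_sum_of_support_subset g hsupp, sum_singleton, pp, X_pow_eq_monomial,
    coeff_monomial, if_pos rfl, one_mul]
  congr 1
  rcases Nat.eq_zero_or_pos k with rfl | hk
  · simp [zfac]
  · simp [zfac, Finsupp.support_single, hk.ne']

theorem qhat_one (a : FF) : qhat a 1 = C (1 - a) * (1 + pp 1) := by
  simp [qhat]

theorem qhatProd_const_one (a : FF) (n : ℕ) :
    qhatProd a (fun _ : Fin n => 1) = C ((1 - a) ^ n) * (1 + pp 1) ^ n := by
  rw [qhatProd, prod_const, card_univ, Fintype.card_fin, qhat_one, mul_pow, map_pow]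

-- The degree of `p_i`, in `ℤ` so that `hZ k` is homogeneous of degree `k` even for `k < 0`.
abbrev degWeight : ℕ+ → ℤ := fun i => (i : ℤ)

theorem Matrix.isWeightedHomogeneous_det {σ R M n : Type*} [CommRing R] [AddCommMonoid M]
    [Fintype n] [DecidableEq n] {w : σ → M} (A : Matrix n n (MvPolynomial σ R)) (a b : n → M)
    (hA : ∀ i j, IsWeightedHomogeneous w (A i j) (a i + b j)) :
    IsWeightedHomogeneous w A.det (∑ i, a i + ∑ j, b j) := by
  rw [Matrix.det_apply]
  refine IsWeightedHomogeneous.sum _ _ _ fun τ _ => ?_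
  rw [← mem_weightedHomogeneousSubmodule]
  refine Submodule.smul_of_tower_mem _ _ ?_
  rw [mem_weightedHomogeneousSubmodule]
  have hτ : ∑ i, (a (τ i) + b i) = ∑ i, a i + ∑ j, b j := by
    rw [sum_add_distrib, Equiv.sum_comp τ a]
  exact hτ ▸ IsWeightedHomogeneous.prod _ _ _ fun i _ => hA (τ i) i

-- The defining equation, with its index `⟨k + 1, _⟩` retyped as an `ℕ+` for `rw`.
theorem hh_succ (n : ℕ) :
    hh (n + 1) = ((n : FF) + 1)⁻¹ • ∑ k ∈ range (n + 1), pp k.succPNat * hh (n - k) := by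
  rw [hh]
  rfl

theorem isWeightedHomogeneous_hh (n : ℕ) : IsWeightedHomogeneous degWeight (hh n) n := by
  induction n using Nat.strong_induction_on with
  | _ n ih =>
    cases n with
    | zero => rw [hh]; exact isWeightedHomogeneous_one _ _
    | succ n =>
      rw [hh_succ, ← mem_weightedHomogeneousSubmodule]
      refine Submodule.smul_mem _ _ (Submodule.sum_mem _ fun k hk => ?_)
      have hk : k ≤ n := Nat.lt_succ_iff.mp (mem_range.mp hk)
      have hdeg : ((n + 1 : ℕ) : ℤ) = ((k + 1 : ℕ) : ℤ) + ((n - k : ℕ) : ℤ) := by omega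
      rw [mem_weightedHomogeneousSubmodule, hdeg]
      exact (isWeightedHomogeneous_X FF degWeight _).mul (ih (n - k) (by omega))

theorem isWeightedHomogeneous_hZ (k : ℤ) : IsWeightedHomogeneous degWeight (hZ k) k := by
  rw [hZ]
  split_ifs with hk
  · simpa [hk] using isWeightedHomogeneous_hh k.toNat
  · exact isWeightedHomogeneous_zero _ _ _

theorem isWeightedHomogeneous_schur {r m : ℕ} {lam : Fin r → ℕ} (hm : ∑ i, lam i = m) :
    IsWeightedHomogeneous degWeight (schur lam) m := by
  have := Matrix.isWeightedHomogeneous_det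
    (Matrix.of fun i j : Fin r => hZ ((lam i : ℤ) + (j : ℤ) - (i : ℤ)))
    (fun i => (lam i : ℤ) - i) (fun j => (j : ℤ)) fun i j => by
      rw [Matrix.of_apply, add_sub_right_comm]
      exact isWeightedHomogeneous_hZ _
  rwa [sum_sub_distrib, sub_add_cancel, ← Nat.cast_sum, hm] at this

theorem hall_one_add_pp_one_pow {n m : ℕ} (hmn : m ≤ n) {g : SymF}
    (hg : IsWeightedHomogeneous degWeight g m) :
    hall ((1 + pp 1) ^ n) g = n.choose m * m.factorial * coeff (Finsupp.single 1 m) g := by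
  have hterm (k : ℕ) :
      pp 1 ^ k * 1 ^ (n - k) * (n.choose k : SymF) = (n.choose k : FF) • pp 1 ^ k := by
    rw [one_pow, mul_one, mul_comm, smul_eq_C_mul, map_natCast]
  simp_rw [add_comm (1 : SymF), add_pow, hterm, hall_sum, hall_smul, hall_pp_one_pow]
  rw [sum_eq_single_of_mem m (mem_range.mpr (by omega))]
  · ring
  · intro k _ hkm
    rw [hg.coeff_eq_zero _ (by simpa [Finsupp.weight_single, degWeight] using hkm), zero_mul,
      mul_zero]

theorem eval_piSingle_eq_coeff {σ R : Type*} [CommSemiring R] [DecidableEq σ] {w : σ → ℤ}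
    {s : σ} (hs : w s = 1) {f : MvPolynomial σ R} {k : ℕ}
    (hf : IsWeightedHomogeneous w f k) :
    eval (Pi.single s 1) f = coeff (Finsupp.single s k) f := by
  rw [eval_eq, sum_eq_single (Finsupp.single s k)]
  · rcases Nat.eq_zero_or_pos k with rfl | hk
    · simp
    · simp [Finsupp.support_single, hk.ne']
  · intro d hd hne
    obtain ⟨i, hi, his⟩ : ∃ i ∈ d.support, i ≠ s := by
      by_contra! h
      have hd' : d = Finsupp.single s (d s) :=
        Finsupp.support_subset_singleton.mp fun i hi => mem_singleton.mpr (h i hi)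
      have hw := hf (mem_support_iff.mp hd)
      rw [hd', Finsupp.weight_single, hs, nsmul_one, Nat.cast_inj] at hw
      exact hne (hw ▸ hd')
    rw [prod_eq_zero hi (by simp [his, Finsupp.mem_support_iff.mp hi]), mul_zero]
  · intro h
    rw [notMem_support_iff.mp h, zero_mul]

theorem eval_pp (k : ℕ+) : eval (Pi.single 1 1) (pp k) = (Pi.single 1 1 : ℕ+ → FF) k :=
  eval_X _

theorem eval_hh (n : ℕ) : eval (Pi.single 1 1) (hh n) = (n.factorial : FF)⁻¹ := by
  induction n using Nat.strong_induction_on with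
  | _ n ih =>
    cases n with
    | zero => simp [hh]
    | succ n =>
      rw [hh_succ, smul_eq_C_mul, map_mul, eval_C, map_sum, sum_eq_single 0]
      · rw [map_mul, eval_pp, show Nat.succPNat 0 = 1 from rfl, Pi.single_eq_same,
          one_mul, Nat.sub_zero, ih n (by omega), Nat.factorial_succ, Nat.cast_mul, mul_inv,
          Nat.cast_succ]
      · intro k _ hk
        have hk1 : k.succPNat ≠ 1 := fun h => hk (Nat.succPNat_injective h)
        rw [map_mul, eval_pp, Pi.single_eq_of_ne hk1, zero_mul]
      · simp

def invFactorialZ (K : Type*) [DivisionRing K] (k : ℤ) : K :=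
  if 0 ≤ k then ((k.toNat).factorial : K)⁻¹ else 0

theorem eval_hZ (k : ℤ) : eval (Pi.single 1 1) (hZ k) = invFactorialZ FF k := by
  rw [hZ, invFactorialZ]
  split_ifs
  · exact eval_hh _
  · exact map_zero _

theorem eval_schur {r : ℕ} (lam : Fin r → ℕ) :
    eval (Pi.single 1 1) (schur lam) =
      (Matrix.of fun i j : Fin r => invFactorialZ FF ((lam i : ℤ) + j - i)).det := by
  rw [schur, RingHom.map_det]
  congr 1
  ext i j
  exact eval_hZ _

theorem natCast_factorial_mul_invFactorialZ {K : Type*} [Field K] [CharZero K] (n c : ℕ) :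
    (n.factorial : K) * invFactorialZ K ((n : ℤ) - c) = n.descFactorial c := by
  rw [invFactorialZ]
  split_ifs with hc
  · have hcn : c ≤ n := by omega
    rw [show ((n : ℤ) - c).toNat = n - c by omega, ← Nat.factorial_mul_descFactorial hcn,
      Nat.cast_mul, mul_comm, ← mul_assoc,
      inv_mul_cancel₀ (Nat.cast_ne_zero.mpr (Nat.factorial_ne_zero _)), one_mul]
  · rw [mul_zero, Nat.descFactorial_eq_zero_iff_lt.mpr (by omega), Nat.cast_zero]

theorem Fin.prod_prod_Ioi_rev {β : Type*} [CommMonoid β] {r : ℕ} (f : Fin r → Fin r → β) :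
    ∏ i : Fin r, ∏ j ∈ Ioi i, f j.rev i.rev = ∏ i, ∏ j ∈ Ioi i, f i j := by
  rw [prod_sigma' univ Ioi, prod_sigma' univ Ioi]
  exact prod_nbij' (fun p => ⟨p.2.rev, p.1.rev⟩) (fun p => ⟨p.2.rev, p.1.rev⟩)
    (by simp) (by simp) (by simp) (by simp) (by simp)

theorem natCast_prod_factorial_mul_det_invFactorialZ {K : Type*} [Field K] [CharZero K] {r : ℕ}
    (x : Fin r → ℕ) :
    (∏ i, ((x i).factorial : K)) *
        (Matrix.of fun i j : Fin r => invFactorialZ K ((x i : ℤ) - j.rev)).det =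
      ∏ i, ∏ j ∈ Ioi i, ((x i : K) - x j) := by
  calc _ = (Matrix.of fun i j : Fin r => (descPochhammer K j).eval (x i.rev : K)).det := by
        rw [← Matrix.det_mul_column, ← Matrix.det_submatrix_equiv_self Fin.revPerm]
        congr 1
        ext i j
        simp only [Matrix.submatrix_apply, Matrix.of_apply, Fin.revPerm_apply, Fin.rev_rev,
          natCast_factorial_mul_invFactorialZ, descPochhammer_eval_eq_descFactorial]
    _ = (Matrix.vandermonde fun i => (x i.rev : K)).det :=
        (Matrix.det_eval_matrixOfPolynomials_eq_det_vandermonde _ _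
          (fun j => descPochhammer_natDegree K j) (fun j => monic_descPochhammer K j)).symm
    _ = _ := by rw [Matrix.det_vandermonde, Fin.prod_prod_Ioi_rev fun i j => (x i : K) - x j]

section Hooks

variable {r : ℕ} {lam : Fin r → ℕ}

def colLen (lam : Fin r → ℕ) (j : ℕ) : ℕ := (univ.filter fun i : Fin r => j < lam i).card

theorem hookLen_eq_colLen (i : Fin r) (j : ℕ) :
    hookLen lam i j = lam i - j + (colLen lam j - i) - 1 := rfl

theorem colLen_le (j : ℕ) : colLen lam j ≤ r :=
  (card_filter_le _ _).trans (card_fin r).le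

theorem colLen_antitone : Antitone (colLen lam) := fun _ _ hjk =>
  card_le_card fun i hi => by
    simp only [mem_filter, mem_univ, true_and] at hi ⊢
    omega

theorem lt_colLen_iff (hlam : Antitone lam) {k : Fin r} {j : ℕ} :
    (k : ℕ) < colLen lam j ↔ j < lam k := by
  constructor
  · intro hk
    by_contra! hkj
    have hsub : (univ.filter fun i : Fin r => j < lam i) ⊆ Iio k := fun i hi => by
      simp only [mem_filter, mem_univ, true_and] at hi
      exact mem_Iio.mpr (lt_of_not_ge fun hki => (hlam hki).not_gt (hkj.trans_lt hi))
    exact ((card_le_card hsub).trans_eq (Fin.card_Iio k)).not_gt hk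
  · intro hjk
    have hsub : Iic k ⊆ univ.filter fun i : Fin r => j < lam i := fun i hi =>
      mem_filter.mpr ⟨mem_univ _, hjk.trans_le (hlam (mem_Iic.mp hi))⟩
    exact (Fin.card_Iic k).symm.trans_le (card_le_card hsub)

def betaNumber (lam : Fin r → ℕ) (i : Fin r) : ℕ := lam i + i.rev

def betaGap (lam : Fin r → ℕ) (j : ℕ) : ℕ := j + r - colLen lam j

theorem betaNumber_strictAnti (hlam : Antitone lam) : StrictAnti (betaNumber lam) := by
  intro i i' hii'
  have := hlam hii'.le
  have : (i : ℕ) < i' := hii'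
  simp only [betaNumber, Fin.val_rev]
  omega

theorem betaGap_strictMono : StrictMono (betaGap lam) := by
  intro a b hab
  have := colLen_antitone (lam := lam) hab.le
  have := colLen_le (lam := lam) a
  simp only [betaGap]
  omega

theorem betaGap_lt_betaNumber (hlam : Antitone lam) {i : Fin r} {j : ℕ} (hj : j < lam i) :
    betaGap lam j < betaNumber lam i := by
  have := (lt_colLen_iff hlam).mpr hj
  have := colLen_le (lam := lam) j
  simp only [betaGap, betaNumber, Fin.val_rev]
  omega

theorem hookLen_eq_betaNumber_sub_betaGap (hlam : Antitone lam) {i : Fin r} {j : ℕ}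
    (hj : j < lam i) : hookLen lam i j = betaNumber lam i - betaGap lam j := by
  have := (lt_colLen_iff hlam).mpr hj
  have := colLen_le (lam := lam) j
  simp only [hookLen_eq_colLen, betaGap, betaNumber, Fin.val_rev]
  omega

theorem betaGap_ne_betaNumber (hlam : Antitone lam) (j : ℕ) (k : Fin r) :
    betaGap lam j ≠ betaNumber lam k := by
  have := colLen_le (lam := lam) j
  have := lt_colLen_iff hlam (k := k) (j := j)
  simp only [betaGap, betaNumber, Fin.val_rev]
  omega

-- `{0, …, β_i - 1}` is the disjoint union of the `β_{i'}` with `i' > i` and the `β_i - h_{ij}`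
-- with `j < λ_i`.
theorem prod_hookLen_mul_prod_betaNumber_sub (hlam : Antitone lam) (i : Fin r) :
    (∏ j ∈ range (lam i), hookLen lam i j) *
        ∏ i' ∈ Ioi i, (betaNumber lam i - betaNumber lam i') =
      (betaNumber lam i).factorial := by
  set gaps := (range (lam i)).image (betaGap lam)
  set betas := (Ioi i).image (betaNumber lam)
  have hdisj : Disjoint gaps betas := by
    simp only [gaps, betas, disjoint_left, mem_image]
    rintro _ ⟨j, -, rfl⟩ ⟨k, -, hk⟩
    exact betaGap_ne_betaNumber hlam j k hk.symm
  have hsub : gaps ∪ betas ⊆ range (betaNumber lam i) := by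
    simp only [gaps, betas, union_subset_iff, image_subset_iff, mem_range, mem_Ioi]
    exact ⟨fun j hj => betaGap_lt_betaNumber hlam hj, fun k hk => betaNumber_strictAnti hlam hk⟩
  have hcard : (range (betaNumber lam i)).card ≤ (gaps ∪ betas).card := by
    rw [card_union_of_disjoint hdisj, card_image_of_injective _ betaGap_strictMono.injective,
      card_image_of_injective _ (betaNumber_strictAnti hlam).injective, Fin.card_Ioi, card_range,
      card_range, betaNumber, Fin.val_rev]
    omega
  rw [← Nat.descFactorial_self, Nat.descFactorial_eq_prod_range,
    ← eq_of_subset_of_card_le hsub hcard, prod_union hdisj,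
    prod_image fun _ _ _ _ h => betaGap_strictMono.injective h,
    prod_image fun _ _ _ _ h => (betaNumber_strictAnti hlam).injective h]
  congr 1
  exact prod_congr rfl fun j hj => hookLen_eq_betaNumber_sub_betaGap hlam (mem_range.mp hj)

theorem natCast_prod_hookLen_mul_prod_betaNumber_sub {K : Type*} [CommRing K]
    (hlam : Antitone lam) :
    (∏ i, ∏ j ∈ range (lam i), (hookLen lam i j : K)) *
        ∏ i, ∏ i' ∈ Ioi i, ((betaNumber lam i : K) - betaNumber lam i') =
      ∏ i, ((betaNumber lam i).factorial : K) := by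
  rw [← prod_mul_distrib]
  refine prod_congr rfl fun i _ => ?_
  rw [← prod_hookLen_mul_prod_betaNumber_sub hlam i, Nat.cast_mul, Nat.cast_prod, Nat.cast_prod]
  congr 1
  refine prod_congr rfl fun i' hi' => ?_
  rw [Nat.cast_sub (betaNumber_strictAnti hlam (mem_Ioi.mp hi')).le]

theorem coeff_single_one_schur {m : ℕ} (hlam : Antitone lam) (hm : ∑ i, lam i = m) :
    coeff (Finsupp.single 1 m) (schur lam) =
      (∏ i, ∏ j ∈ range (lam i), (hookLen lam i j : FF))⁻¹ := by
  set H := ∏ i, ∏ j ∈ range (lam i), (hookLen lam i j : FF)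
  set D := ∏ i, ∏ i' ∈ Ioi i, ((betaNumber lam i : FF) - betaNumber lam i')
  have hHD : H * D = ∏ i, ((betaNumber lam i).factorial : FF) :=
    natCast_prod_hookLen_mul_prod_betaNumber_sub hlam
  have hD : D ≠ 0 := right_ne_zero_of_mul <| hHD ▸
    prod_ne_zero_iff.mpr fun _ _ => Nat.cast_ne_zero.mpr (Nat.factorial_ne_zero _)
  have hentries : (Matrix.of fun i j : Fin r => invFactorialZ FF ((lam i : ℤ) + j - i)) =
      Matrix.of fun i j : Fin r => invFactorialZ FF ((betaNumber lam i : ℤ) - j.rev) := by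
    ext i j
    simp only [Matrix.of_apply, betaNumber, Fin.val_rev]
    congr 1
    omega
  have hdet := natCast_prod_factorial_mul_det_invFactorialZ (K := FF) (betaNumber lam)
  rw [← hHD, mul_comm H, mul_assoc] at hdet
  have hHdet : H * _ = 1 := mul_left_cancel₀ hD (hdet.trans (mul_one D).symm)
  rw [← eval_piSingle_eq_coeff (w := degWeight) rfl (isWeightedHomogeneous_schur hm),
    eval_schur, hentries]
  exact eq_inv_of_mul_eq_one_right hHdet

end Hooks

theorem qv_sub_one_ne_zero : qv - 1 ≠ 0 := sub_ne_zero.mpr fun h =>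
  Polynomial.X_ne_C (1 : ℚ) (by simpa [qv] using congrArg RatFunc.num h)

/-- For a partition λ ⊢ m and n ≥ m, χ^λ_{(1^n)}(q) = C(n,m)·m!/∏_{(i,j)∈λ} h_{ij}. -/
theorem chi_column (r n m : ℕ) (lam : Fin r → ℕ)
    (hlam_anti : ∀ i j : Fin r, i ≤ j → lam j ≤ lam i) (hlam_sum : ∑ i, lam i = m)
    (hmn : m ≤ n) :
    chi lam (fun _ : Fin n => 1) =
      (n.choose m : FF) * (m.factorial : FF) /
        ∏ i : Fin r, ∏ j ∈ Finset.range (lam i), (hookLen lam i j : FF) := by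
  have hell : ell (fun _ : Fin n => 1) = n := by simp [ell]
  have hq : qv * (1 - qv⁻¹) = qv - 1 := by
    rw [mul_sub, mul_one, mul_inv_cancel₀ RatFunc.X_ne_zero]
  rw [chi, hell, qhatProd_const_one, ← smul_eq_C_mul, hall_smul,
    hall_one_add_pp_one_pow hmn (isWeightedHomogeneous_schur hlam_sum),
    coeff_single_one_schur (fun i j h => hlam_anti i j h) hlam_sum]
  simp only [sum_const, card_univ, Fintype.card_fin, smul_eq_mul, mul_one]
  rw [div_mul_eq_mul_div, ← mul_assoc, ← mul_pow, hq,
    mul_div_cancel_left₀ _ (pow_ne_zero n qv_sub_one_ne_zero), div_eq_mul_inv]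

end
end

section
/- For a partition μ = (μ_1, …, μ_l) of n with l = l(μ) nonzero parts, Σ_{i≥0} Σ_{j≥0} a_{ij}(μ;q) (−q)^i (−q)^j = ∏_{i=1}^{l} (1−q)·A(μ_i;q), where A(m;q) = ((−q)^{m−1}(q^2+6q+1) + 4)/(q+1)^2 + 2(−q)^{m−1}(q−1)m/(q+1). -/
open Finset

noncomputable section

/-- a_{ij}(μ;t) = Σ_{τ ∈ C(μ;i)} Σ_{θ ∈ C(μ-τ;j)} (1-t⁻¹)^{l(τ)+l(θ)} (1-t)^{l(μ-τ-θ)}.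
(This expression automatically vanishes when i + j > |μ|, since then the index set
of the inner sum is empty.) -/
def aco {l : ℕ} (t : FF) (mu : Fin l → ℕ) (i j : ℕ) : FF :=
  ∑ τ ∈ Cset mu i, ∑ θ ∈ Cset (mu - τ) j,
    (1 - t⁻¹) ^ (ell τ + ell θ) * (1 - t) ^ ell (mu - τ - θ)

/-- b_{ij}(μ;t) = Σ_{τ ∈ C(μ;i)} Σ_{θ ∈ C(μ-τ;j)} (1-t⁻¹)^{l(τ)+l(θ)+l(μ-τ-θ)}.
(This expression automatically vanishes when i + j > |μ|.) -/
def bco {l : ℕ} (t : FF) (mu : Fin l → ℕ) (i j : ℕ) : FF :=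
  ∑ τ ∈ Cset mu i, ∑ θ ∈ Cset (mu - τ) j,
    (1 - t⁻¹) ^ (ell τ + ell θ + ell (mu - τ - θ))

/-- A(m;q) = ((-q)^{m-1}(q²+6q+1)+4)/(q+1)² + 2(-q)^{m-1}(q-1)m/(q+1). -/
def Afun (q : FF) (m : ℕ) : FF :=
  ((-q) ^ (m - 1) * (q ^ 2 + 6 * q + 1) + 4) / (q + 1) ^ 2 +
    2 * (-q) ^ (m - 1) * (q - 1) * (m : FF) / (q + 1)


/-!
Weight each part of `τ`, of `θ` and of `μ - τ - θ` separately: a part `a` of `τ` or `θ` carries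
`(-q)^a`, times `1 - q⁻¹` if `a ≠ 0`, and a nonzero part of `μ - τ - θ` carries `1 - q`. The summand
of `Σ a_{ij} (-q)^i (-q)^j` is then the product of these weights over the parts, and since `τ ≤ μ`,
`θ ≤ μ - τ` are independent conditions on each coordinate, the whole sum factors into one sum per
part `μ_k` over the splittings `μ_k = a + b + c`. Writing the weight of `a` as
`(1 - q⁻¹)(-q)^a + q⁻¹ [a = 0]`, that one-part sum reduces to geometric sums and equals
`(1 - q) A(μ_k; q)`.
-/

section PartWeight

variable {R : Type*}

def partWeight [One R] (c : R) (a : ℕ) : R := if a = 0 then 1 else c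

theorem prod_partWeight [CommMonoid R] {l : ℕ} (c : R) (v : Fin l → ℕ) :
    ∏ k, partWeight c (v k) = c ^ ell v := by
  simp only [partWeight]
  rw [prod_ite, prod_const_one, prod_const, one_mul, ell]

theorem sum_range_mul_partWeight [CommRing R] (u : R) (c : ℕ → R) (k : ℕ) :
    ∑ b ∈ range (k + 1), c b * partWeight u (k - b) =
      u * ∑ b ∈ range (k + 1), c b + (1 - u) * c k := by
  have hlt : ∀ b ∈ range k, c b * partWeight u (k - b) = u * c b := fun b hb => by
    rw [partWeight, if_neg (by have := mem_range.mp hb; omega), mul_comm]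
  rw [sum_range_succ, sum_congr rfl hlt, ← mul_sum, sum_range_succ, Nat.sub_self, partWeight,
    if_pos rfl]
  ring

end PartWeight

section MarkedWeight

variable {K : Type*} [Field K]

def markedWeight (t : K) (a : ℕ) : K := (-t) ^ a * partWeight (1 - t⁻¹) a

theorem prod_markedWeight {l : ℕ} (t : K) (v : Fin l → ℕ) :
    ∏ k, markedWeight t (v k) = (-t) ^ (∑ k, v k) * (1 - t⁻¹) ^ ell v := by
  simp only [markedWeight]
  rw [prod_mul_distrib, prod_pow_eq_pow_sum, prod_partWeight]

theorem markedWeight_eq (t : K) (a : ℕ) :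
    markedWeight t a = (1 - t⁻¹) * (-t) ^ a + if a = 0 then t⁻¹ else 0 := by
  rcases eq_or_ne a 0 with rfl | ha
  · simp [markedWeight, partWeight]
  · simp [markedWeight, partWeight, ha, mul_comm]

theorem sum_range_markedWeight {t : K} (ht : t + 1 ≠ 0) (m : ℕ) :
    ∑ a ∈ range (m + 1), markedWeight t a = (1 - t⁻¹) * (1 + t * (-t) ^ m) / (t + 1) + t⁻¹ := by
  have ht' : -t - 1 ≠ 0 := by intro h; apply ht; linear_combination -h
  simp only [markedWeight_eq, sum_add_distrib, ← mul_sum, geom_sum_eq (sub_ne_zero.mp ht'),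
    sum_ite_eq', mem_range, Nat.succ_pos, if_true]
  field_simp
  ring

theorem sum_range_markedWeight_mul_pow (t : K) (m : ℕ) :
    ∑ a ∈ range (m + 1), markedWeight t a * (-t) ^ (m - a) =
      ((1 - t⁻¹) * (m + 1) + t⁻¹) * (-t) ^ m := by
  have hterm : ∀ a ∈ range (m + 1), markedWeight t a * (-t) ^ (m - a) =
      (1 - t⁻¹) * (-t) ^ m + if a = 0 then t⁻¹ * (-t) ^ m else 0 := fun a ha => by
    rw [markedWeight_eq, add_mul, mul_assoc, pow_mul_pow_sub _ (by have := mem_range.mp ha; omega)]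
    split_ifs with h0 <;> simp [h0]
  rw [sum_congr rfl hterm, sum_add_distrib, sum_const, card_range, sum_ite_eq', if_pos (by simp),
    nsmul_eq_mul]
  push_cast
  ring

theorem sum_range_markedWeight_mul_partWeight {t : K} (ht₀ : t ≠ 0) (ht₁ : t + 1 ≠ 0) (k : ℕ) :
    ∑ b ∈ range (k + 1), markedWeight t b * partWeight (1 - t) (k - b) =
      2 * (1 - t) / (t + 1) * (1 - (-t) ^ k) + if k = 0 then 1 else 0 := by
  rw [sum_range_mul_partWeight, sum_range_markedWeight ht₁, markedWeight_eq]
  split_ifs with hk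
  · subst hk; field_simp; ring
  · field_simp; ring

def onePartSum (t : K) (m : ℕ) : K :=
  ∑ a ∈ Iic m, ∑ b ∈ Iic (m - a),
    markedWeight t a * markedWeight t b * partWeight (1 - t) (m - a - b)

end MarkedWeight

theorem onePartSum_eq {t : FF} (ht₀ : t ≠ 0) (ht₁ : t + 1 ≠ 0) {m : ℕ} (hm : m ≠ 0) :
    onePartSum t m = (1 - t) * Afun t m := by
  have hinner : ∀ a ∈ range (m + 1),
      ∑ b ∈ Iic (m - a), markedWeight t a * markedWeight t b * partWeight (1 - t) (m - a - b) =
        2 * (1 - t) / (t + 1) * markedWeight t a -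
          2 * (1 - t) / (t + 1) * (markedWeight t a * (-t) ^ (m - a)) +
            if a = m then markedWeight t a else 0 := fun a ha => by
    have ham : m - a = 0 ↔ a = m := by have := mem_range.mp ha; omega
    simp only [← Nat.range_succ_eq_Iic, mul_assoc, ← mul_sum,
      sum_range_markedWeight_mul_partWeight ht₀ ht₁, ham]
    split_ifs <;> ring
  rw [onePartSum, ← Nat.range_succ_eq_Iic, sum_congr rfl hinner, sum_add_distrib, sum_sub_distrib,
    ← mul_sum, ← mul_sum, sum_range_markedWeight_mul_pow,
    sum_range_markedWeight ht₁, sum_ite_eq', if_pos (mem_range.mpr m.lt_succ_self),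
    markedWeight_eq, if_neg hm, Afun]
  obtain ⟨k, rfl⟩ := Nat.exists_eq_succ_of_ne_zero hm
  simp only [Nat.succ_sub_one, pow_succ]
  push_cast
  field_simp
  ring

section Factorization

variable {R : Type*} [CommSemiring R] {l : ℕ}

theorem sum_Iic_prod (m : Fin l → ℕ) (g : Fin l → ℕ → R) :
    ∑ τ ∈ Iic m, ∏ k, g k (τ k) = ∏ k, ∑ a ∈ Iic (m k), g k a := by
  have hIic : Iic m = Fintype.piFinset fun k => Iic (m k) := by
    ext τ
    simp [Fintype.mem_piFinset, Pi.le_def]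
  rw [hIic, prod_univ_sum]

theorem sum_Iic_sum_Iic_prod (μ : Fin l → ℕ) (f g h : ℕ → R) :
    ∑ τ ∈ Iic μ, ∑ θ ∈ Iic (μ - τ), ∏ k, f (τ k) * g (θ k) * h ((μ - τ - θ) k) =
      ∏ k, ∑ a ∈ Iic (μ k), ∑ b ∈ Iic (μ k - a), f a * g b * h (μ k - a - b) := by
  rw [← sum_Iic_prod μ fun k a => ∑ b ∈ Iic (μ k - a), f a * g b * h (μ k - a - b)]
  refine sum_congr rfl fun τ _ => ?_
  exact sum_Iic_prod (μ - τ) fun k b => f (τ k) * g b * h (μ k - τ k - b)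

end Factorization

section Cset

variable {M : Type*} [AddCommMonoid M] {l : ℕ}

theorem Cset_eq_empty {μ : Fin l → ℕ} {k : ℕ} (hk : ∑ i, μ i < k) : Cset μ k = ∅ := by
  refine filter_eq_empty_iff.mpr fun τ hτ hτk => ?_
  have : ∑ i, τ i ≤ ∑ i, μ i := sum_le_sum fun i _ => mem_Iic.mp hτ i
  omega

theorem support_sum_Cset_subset (μ : Fin l → ℕ) (G : (Fin l → ℕ) → M) :
    Function.support (fun k => ∑ τ ∈ Cset μ k, G τ) ⊆ range (∑ i, μ i + 1) := by
  intro k hk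
  by_contra hlt
  apply hk
  show ∑ τ ∈ Cset μ k, G τ = 0
  rw [Cset_eq_empty (by simpa using hlt), sum_empty]

theorem finsum_sum_Cset (μ : Fin l → ℕ) (G : (Fin l → ℕ) → M) :
    ∑ᶠ k, ∑ τ ∈ Cset μ k, G τ = ∑ τ ∈ Iic μ, G τ := by
  rw [finsum_eq_sum_of_support_subset _ (support_sum_Cset_subset μ G)]
  refine sum_fiberwise_of_maps_to (fun τ hτ => mem_range.mpr ?_) G
  have : ∑ i, τ i ≤ ∑ i, μ i := sum_le_sum fun i _ => mem_Iic.mp hτ i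
  omega

end Cset

theorem aco_mul_pow_mul_pow {l : ℕ} (t : FF) (μ : Fin l → ℕ) (i j : ℕ) :
    aco t μ i j * (-t) ^ i * (-t) ^ j =
      ∑ τ ∈ Cset μ i, ∑ θ ∈ Cset (μ - τ) j,
        ∏ k, markedWeight t (τ k) * markedWeight t (θ k) * partWeight (1 - t) ((μ - τ - θ) k) := by
  simp only [aco, sum_mul]
  refine sum_congr rfl fun τ hτ => sum_congr rfl fun θ hθ => ?_
  rw [← (mem_filter.mp hτ).2, ← (mem_filter.mp hθ).2, prod_mul_distrib, prod_mul_distrib,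
    prod_markedWeight, prod_markedWeight, prod_partWeight, pow_add]
  ring

theorem finsum_finsum_aco_mul_pow {l : ℕ} (t : FF) (μ : Fin l → ℕ) :
    ∑ᶠ i, ∑ᶠ j, aco t μ i j * (-t) ^ i * (-t) ^ j = ∏ k, onePartSum t (μ k) := by
  simp_rw [aco_mul_pow_mul_pow]
  rw [finsum_congr fun i => finsum_sum_comm _ _ fun τ _ =>
    (finite_toSet _).subset (support_sum_Cset_subset (μ - τ) _)]
  simp_rw [finsum_sum_Cset]
  exact sum_Iic_sum_Iic_prod μ _ _ _

theorem tv_ne_zero : tv ≠ 0 := RatFunc.X_ne_zero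

theorem tv_add_one_ne_zero : tv + 1 ≠ 0 := by
  have : tv + 1 = algebraMap (Polynomial ℚ) FF (Polynomial.X + 1) := by
    simp [tv, RatFunc.algebraMap_X]
  rw [this, map_ne_zero_iff _ (RatFunc.algebraMap_injective ℚ)]
  exact Polynomial.X_add_C_ne_zero 1

theorem aco_sum_neg_general (l : ℕ) (mu : Fin l → ℕ) (hmu_pos : ∀ i, 0 < mu i) :
    ∑ᶠ i : ℕ, ∑ᶠ j : ℕ, aco tv mu i j * (-tv) ^ i * (-tv) ^ j =
      ∏ i : Fin l, (1 - tv) * Afun tv (mu i) := by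
  rw [finsum_finsum_aco_mul_pow]
  exact prod_congr rfl fun i _ => onePartSum_eq tv_ne_zero tv_add_one_ne_zero (hmu_pos i).ne'

/-- Corollary 3.9, identity (3.21):
Σ_{i,j≥0} a_{ij}(μ;q) (-q)^i (-q)^j = ∏_{i=1}^{l} (1-q)·A(μ_i;q). -/
theorem aco_sum_neg (l n : ℕ) (mu : Fin l → ℕ)
    (hmu_anti : ∀ i j : Fin l, i ≤ j → mu j ≤ mu i) (hmu_pos : ∀ i, 0 < mu i)
    (hmu_sum : ∑ i, mu i = n) :
    ∑ᶠ i : ℕ, ∑ᶠ j : ℕ, aco tv mu i j * (-tv) ^ i * (-tv) ^ j =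
      ∏ i : Fin l, (1 - tv) * Afun tv (mu i) :=
  aco_sum_neg_general l mu hmu_pos
end
end
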